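/- arXiv:2102.00888 — 3 statements merged into one kernel-verified Lean document; each statement's English description precedes it below -/
import Mathlib

section
/- Let c be a real number and let a : ℕ → ℝ satisfy a(1) = 9c, a(2) = 9c² + 9c, and the recurrence a(i) = a(i−1) + 6·a(i−2) + 3·6^{i−2}·c² for all i ≥ 3. Then for every i ≥ 1, 40·a(i) = c·( (5·6^i + 27·(−2)^i + 8·3^i)·c + 72·(3^i − (−2)^i) ). -/
theorem sl3_weight_system_ladder_closed_form
    (c : ℝ) (a : ℕ → ℝ) (h1 : a 1 = 9 * c) (h2 : a 2 = 9 * c ^ 2 + 9 * c)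
    (hrec : ∀ i, 3 ≤ i → a i = a (i - 1) + 6 * a (i - 2) + 3 * 6 ^ (i - 2) * c ^ 2) :
    ∀ i, 1 ≤ i → 40 * a i =
      c * ((5 * 6 ^ i + 27 * (-2 : ℝ) ^ i + 8 * 3 ^ i) * c
        + 72 * (3 ^ i - (-2 : ℝ) ^ i)) := by
  intro i
  induction i using Nat.strong_induction_on with
  | _ i ih =>
    intro hi
    match i, hi with
    | 1, _ => rw [h1]; ring
    | 2, _ => rw [h2]; ring
    | (n+3), _ =>
      have e1 := ih (n+2) (by omega) (by omega)
      have e2 := ih (n+1) (by omega) (by omega)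
      have hr := hrec (n+3) (by omega)
      simp only [show n+3-1 = n+2 from rfl, show n+3-2 = n+1 from rfl] at hr
      rw [hr]
      have h40 : (40:ℝ) * (a (n+2) + 6 * a (n+1) + 3 * 6 ^ (n+1) * c ^ 2)
          = 40 * a (n+2) + 6 * (40 * a (n+1)) + 120 * 6 ^ (n+1) * c ^ 2 := by ring
      rw [h40, e1, e2]
      ring
end

section
/- Let c be a real number and let a : ℕ → ℝ satisfy a(0) = 0, a(1) = 9c, a(2) = 9c² + 9c, and the recurrence a(i) = a(i−1) + 6·a(i−2) + 3·6^{i−2}·c² for all i ≥ 3. Then for every real x, the series ∑_{n≥0} a(n)·x^n/n! converges with sum c²·( (1/8)·e^{6x} + (27/40)·e^{−2x} + (1/5)·e^{3x} ) + (9c/5)·( e^{3x} − e^{−2x} ) − c². -/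
/-!
The recurrence has characteristic roots `3` and `-2` and an inhomogeneous term geometric in `6`,
so for `n ≥ 1` the sequence is a combination of `6 ^ n`, `3 ^ n` and `(-2) ^ n`; at `n = 0` that
combination equals `c ^ 2` instead of `a 0 = 0`. The exponential generating function of `r ^ n`
is `exp (r * x)`.
-/

open Nat

noncomputable def ladderClosedForm (c : ℝ) (n : ℕ) : ℝ :=
  c ^ 2 / 8 * 6 ^ n + (27 * c ^ 2 / 40 - 9 * c / 5) * (-2) ^ n
    + (c ^ 2 / 5 + 9 * c / 5) * 3 ^ n - if n = 0 then c ^ 2 else 0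

theorem ladderClosedForm_add_three (c : ℝ) (m : ℕ) :
    ladderClosedForm c (m + 3) = ladderClosedForm c (m + 2) + 6 * ladderClosedForm c (m + 1)
      + 3 * 6 ^ (m + 1) * c ^ 2 := by
  simp only [ladderClosedForm, add_eq_zero, one_ne_zero, OfNat.ofNat_ne_zero, and_false,
    if_false, pow_succ]
  ring

theorem eq_ladderClosedForm {c : ℝ} {a : ℕ → ℝ} (h0 : a 0 = 0) (h1 : a 1 = 9 * c)
    (h2 : a 2 = 9 * c ^ 2 + 9 * c)
    (hrec : ∀ i, 3 ≤ i → a i = a (i - 1) + 6 * a (i - 2) + 3 * 6 ^ (i - 2) * c ^ 2) (n : ℕ) :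
    a n = ladderClosedForm c n := by
  induction n using Nat.strong_induction_on with
  | _ n ih =>
    match n with
    | 0 => norm_num [ladderClosedForm, h0]; ring
    | 1 => norm_num [ladderClosedForm, h1]; ring
    | 2 => norm_num [ladderClosedForm, h2]; ring
    | m + 3 =>
      rw [hrec (m + 3) (by omega), ladderClosedForm_add_three, show m + 3 - 1 = m + 2 from rfl,
        show m + 3 - 2 = m + 1 from rfl, ih (m + 2) (by omega), ih (m + 1) (by omega)]

theorem Real.hasSum_pow_mul_pow_div_factorial (r x : ℝ) :
    HasSum (fun n => r ^ n * x ^ n / n !) (Real.exp (r * x)) := by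
  simp_rw [← mul_pow, Real.exp_eq_exp_ℝ]
  exact NormedSpace.expSeries_div_hasSum_exp (r * x)

theorem hasSum_ladderClosedForm_mul_pow_div_factorial (c x : ℝ) :
    HasSum (fun n => ladderClosedForm c n * x ^ n / n !)
      (c ^ 2 / 8 * Real.exp (6 * x) + (27 * c ^ 2 / 40 - 9 * c / 5) * Real.exp (-2 * x)
        + (c ^ 2 / 5 + 9 * c / 5) * Real.exp (3 * x) - c ^ 2) := by
  have hgeom (α r : ℝ) : HasSum (fun n => α * (r ^ n * x ^ n / n !)) (α * Real.exp (r * x)) :=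
    (Real.hasSum_pow_mul_pow_div_factorial r x).mul_left α
  have hconst : HasSum (fun n : ℕ => (if n = 0 then c ^ 2 else 0) * x ^ n / n !) (c ^ 2) := by
    convert hasSum_single (f := fun n : ℕ => (if n = 0 then c ^ 2 else 0) * x ^ n / n !) 0
      (fun n hn => by simp [hn]) using 1
    simp
  refine ((((hgeom _ 6).add (hgeom _ (-2))).add (hgeom _ 3)).sub hconst).congr_fun fun n => ?_
  simp only [ladderClosedForm]
  ring

theorem sl3_weight_system_ladder_egf
    (c : ℝ) (a : ℕ → ℝ) (h0 : a 0 = 0) (h1 : a 1 = 9 * c)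
    (h2 : a 2 = 9 * c ^ 2 + 9 * c)
    (hrec : ∀ i, 3 ≤ i → a i = a (i - 1) + 6 * a (i - 2) + 3 * 6 ^ (i - 2) * c ^ 2)
    (x : ℝ) :
    HasSum (fun n => a n * x ^ n / n.factorial)
      (c ^ 2 * ((1 / 8) * Real.exp (6 * x) + (27 / 40) * Real.exp (-2 * x)
          + (1 / 5) * Real.exp (3 * x))
        + (9 * c / 5) * (Real.exp (3 * x) - Real.exp (-2 * x)) - c ^ 2) := by
  simp_rw [eq_ladderClosedForm h0 h1 h2 hrec]
  convert hasSum_ladderClosedForm_mul_pow_div_factorial c x using 1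
  ring
end

section
/- Let c be a real number and let a : ℕ → ℝ satisfy a(0) = 0, a(1) = 9c, a(2) = 9c² + 9c, and the recurrence a(i) = a(i−1) + 6·a(i−2) + 3·6^{i−2}·c² for all i ≥ 3. Define b(n) = ∑_{k=0}^{n} C(n, k)·(−6)^{n−k}·a(k). Then for every n ≥ 1, 40·b(n) = c·( (27c − 72)·(−8)^n + (8c + 72)·(−3)^n − 40c·(−6)^n ). -/
theorem sl3_weight_system_K2n_primitive_closed_form
    (c : ℝ) (a : ℕ → ℝ) (h0 : a 0 = 0) (h1 : a 1 = 9 * c)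
    (h2 : a 2 = 9 * c ^ 2 + 9 * c)
    (hrec : ∀ i, 3 ≤ i → a i = a (i - 1) + 6 * a (i - 2) + 3 * 6 ^ (i - 2) * c ^ 2)
    (b : ℕ → ℝ)
    (hb : ∀ n, b n = ∑ k ∈ Finset.range (n + 1),
      (n.choose k : ℝ) * (-6 : ℝ) ^ (n - k) * a k) :
    ∀ n, 1 ≤ n → 40 * b n =
      c * ((27 * c - 72) * (-8 : ℝ) ^ n + (8 * c + 72) * (-3 : ℝ) ^ n
        - 40 * c * (-6 : ℝ) ^ n) := by
  set α : ℝ := (8 * c ^ 2 + 72 * c) / 40 with hα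
  set β : ℝ := (27 * c ^ 2 - 72 * c) / 40 with hβ
  set f : ℕ → ℝ := fun k => α * 3 ^ k + β * (-2 : ℝ) ^ k + c ^ 2 / 8 * 6 ^ k with hf
  have ha : ∀ k, 1 ≤ k → a k = f k := by
    intro k
    induction k using Nat.strong_induction_on with
    | _ k ih =>
      intro hk
      match k, hk with
      | 1, _ => simp only [hf, h1, hα, hβ]; ring
      | 2, _ => simp only [hf, h2, hα, hβ]; ring
      | (m+3), _ =>
        rw [hrec (m+3) (by omega)]
        have e1 : m + 3 - 1 = m + 2 := rfl
        have e2 : m + 3 - 2 = m + 1 := rfl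
        rw [e1, e2, ih (m+2) (by omega) (by omega), ih (m+1) (by omega) (by omega)]
        simp only [hf]
        ring
  intro n hn
  have hsum : ∀ r : ℝ, ∑ k ∈ Finset.range (n+1),
      (n.choose k : ℝ) * (-6 : ℝ) ^ (n - k) * r ^ k = (r + -6) ^ n := by
    intro r
    rw [add_pow]
    exact Finset.sum_congr rfl fun k _ => by ring
  have hfsum : ∑ k ∈ Finset.range (n+1), (n.choose k : ℝ) * (-6 : ℝ) ^ (n - k) * f k
      = α * (-3 : ℝ) ^ n + β * (-8 : ℝ) ^ n := by
    have expand : ∀ k ∈ Finset.range (n+1),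
        (n.choose k : ℝ) * (-6 : ℝ) ^ (n - k) * f k
          = α * ((n.choose k : ℝ) * (-6 : ℝ) ^ (n - k) * (3:ℝ) ^ k)
            + β * ((n.choose k : ℝ) * (-6 : ℝ) ^ (n - k) * (-2:ℝ) ^ k)
            + c ^ 2 / 8 * ((n.choose k : ℝ) * (-6 : ℝ) ^ (n - k) * (6:ℝ) ^ k) := by
      intro k _; simp only [hf]; ring
    rw [Finset.sum_congr rfl expand]
    rw [Finset.sum_add_distrib, Finset.sum_add_distrib, ← Finset.mul_sum,
      ← Finset.mul_sum, ← Finset.mul_sum, hsum, hsum, hsum]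
    rw [show (3:ℝ) + -6 = -3 by norm_num, show (-2:ℝ) + -6 = -8 by norm_num,
      show (6:ℝ) + -6 = 0 by norm_num, zero_pow (by omega : n ≠ 0)]
    ring
  have hbn : b n = α * (-3 : ℝ) ^ n + β * (-8 : ℝ) ^ n - c ^ 2 * (-6 : ℝ) ^ n := by
    rw [hb n, Finset.sum_range_succ']
    have congr1 : ∀ i ∈ Finset.range n,
        (n.choose (i+1) : ℝ) * (-6 : ℝ) ^ (n - (i+1)) * a (i+1)
          = (n.choose (i+1) : ℝ) * (-6 : ℝ) ^ (n - (i+1)) * f (i+1) := by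
      intro i _; rw [ha (i+1) (by omega)]
    rw [Finset.sum_congr rfl congr1, h0]
    have := hfsum
    rw [Finset.sum_range_succ'] at this
    have hf0 : f 0 = c ^ 2 := by simp [hf, hα, hβ]; ring
    rw [hf0] at this
    simp only [Nat.choose_zero_right, Nat.cast_one, Nat.sub_zero] at this ⊢
    linarith [this]
  rw [hbn, hα, hβ]
  ring
end
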